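/- Let s ∈ (1,2) and μ > 2^{1−s}. Define g: [0,1] → ℝ by g(x) = ((x+1)² − 1)/2 for x ≤ 1/2 and g(x) = ((x−2)² − 1)/2 for x > 1/2 (this is the sharp-peak function g(·; 1/2, 1, 1, 2, 2)), and set F(x) = (1/s)|x − 1/2|^s + μ·g(x). Then F has no local minimizer in the open interval (0,1), and the set of global minimizers of F over [0,1] is exactly {0, 1}. -/

import Mathlib

open Set Topology Filter

/-- The sharp-peak function `g(·; 1/2, 1, 1, 2, 2)`. -/
noncomputable def g16 : ℝ → ℝ := fun x =>
  if x ≤ 1/2 then ((x + 1) ^ 2 - 1) / 2 else ((x - 2) ^ 2 - 1) / 2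

lemma g16_left {x : ℝ} (hx : x ≤ 1/2) : g16 x = ((x + 1) ^ 2 - 1) / 2 := if_pos hx

lemma g16_right {x : ℝ} (hx : 1/2 ≤ x) : g16 x = ((x - 2) ^ 2 - 1) / 2 := by
  unfold g16
  split_ifs with h
  · have : x = 1/2 := le_antisymm h hx
    subst this; norm_num
  · rfl

lemma key16 (s : ℝ) (hs1 : 1 < s) {a b : ℝ} (ha : 0 ≤ a) (hab : a ≤ b) (hb2 : b ≤ 1/2) :
    b ^ s - a ^ s ≤ s * 2 ^ (1 - s) * (b - a) := by
  have hs0 : (0:ℝ) < s := by linarith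
  rcases eq_or_lt_of_le (ha.trans hab) with hb0 | hb0
  · have ha0 : a = 0 := le_antisymm (hab.trans hb0.symm.le) ha
    subst ha0
    rw [← hb0]
    rw [Real.zero_rpow (ne_of_gt hs0)]
    simp
  · -- 0 < b
    have hbs : (0:ℝ) < b ^ s := Real.rpow_pos_of_pos hb0 s
    have h1 : 1 + s * (a / b - 1) ≤ (a / b) ^ s := by
      have := one_add_mul_self_le_rpow_one_add (s := a / b - 1)
        (by have : 0 ≤ a / b := div_nonneg ha hb0.le; linarith) hs1.le
      simpa using this
    have h2 : (1 + s * (a / b - 1)) * b ^ s ≤ a ^ s := by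
      calc (1 + s * (a / b - 1)) * b ^ s ≤ (a / b) ^ s * b ^ s :=
            mul_le_mul_of_nonneg_right h1 hbs.le
        _ = a ^ s := by
            rw [Real.div_rpow ha hb0.le]
            field_simp
    have hb1 : b ^ (s - 1) * b = b ^ s := by
      rw [← Real.rpow_add_one (ne_of_gt hb0)]
      ring_nf
    have hdiv : a / b * b ^ s = a * b ^ (s - 1) := by
      rw [← hb1]; field_simp
    have h3 : b ^ s + s * (a * b ^ (s - 1)) - s * b ^ s ≤ a ^ s := by
      have hexp : (1 + s * (a / b - 1)) * b ^ s
          = b ^ s + s * (a / b * b ^ s) - s * b ^ s := by ring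
      rw [hexp, hdiv] at h2
      linarith
    have hble : b ^ (s - 1) ≤ 2 ^ (1 - s) := by
      have h4 : b ^ (s - 1) ≤ ((1:ℝ)/2) ^ (s - 1) :=
        Real.rpow_le_rpow hb0.le hb2 (by linarith)
      have h5 : ((1:ℝ)/2) ^ (s - 1) = 2 ^ (1 - s) := by
        rw [show (1:ℝ) - s = -(s - 1) by ring, Real.rpow_neg (by norm_num),
          show (1:ℝ)/2 = 2⁻¹ by norm_num, Real.inv_rpow (by norm_num)]
      rw [h5] at h4; exact h4
    have hmul : s * ((b - a) * b ^ (s - 1)) ≤ s * ((b - a) * 2 ^ (1 - s)) := by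
      apply mul_le_mul_of_nonneg_left _ hs0.le
      exact mul_le_mul_of_nonneg_left hble (by linarith)
    nlinarith [h3, hmul, hb1, mul_le_mul_of_nonneg_left hb1.le hs0.le]

lemma mono16 (s μ : ℝ) (hs1 : 1 < s) (hμ : (2:ℝ) ^ (1 - s) < μ) {x y : ℝ}
    (hx0 : 0 ≤ x) (hxy : x < y) (hy : y ≤ 1/2) :
    (1/s) * |x - 1/2| ^ s + μ * g16 x < (1/s) * |y - 1/2| ^ s + μ * g16 y := by
  have hs0 : (0:ℝ) < s := by linarith
  have h2p : (0:ℝ) < 2 ^ (1 - s) := Real.rpow_pos_of_pos (by norm_num) _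
  have hμ0 : (0:ℝ) < μ := h2p.trans hμ
  rw [g16_left (by linarith), g16_left hy,
    abs_of_nonpos (by linarith : x - 1/2 ≤ 0), abs_of_nonpos (by linarith : y - 1/2 ≤ 0)]
  have hkey := key16 s hs1 (a := 1/2 - y) (b := 1/2 - x) (by linarith) (by linarith) (by linarith)
  have hA : (1/s) * ((1/2 - x) ^ s - (1/2 - y) ^ s) ≤ 2 ^ (1 - s) * (y - x) := by
    have h := mul_le_mul_of_nonneg_left hkey (by positivity : (0:ℝ) ≤ 1/s)
    calc (1/s) * ((1/2 - x) ^ s - (1/2 - y) ^ s)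
        ≤ (1/s) * (s * 2 ^ (1 - s) * ((1/2 - x) - (1/2 - y))) := h
      _ = 2 ^ (1 - s) * (y - x) := by field_simp; ring
    
  have hxm : -(x - 1/2) = 1/2 - x := by ring
  have hym : -(y - 1/2) = 1/2 - y := by ring
  rw [hxm, hym]
  nlinarith [hA, mul_pos (sub_pos.mpr hμ) (sub_pos.mpr hxy),
    mul_nonneg (mul_nonneg hμ0.le (sub_pos.mpr hxy).le) (by linarith : (0:ℝ) ≤ x + y)]

lemma anti16 (s μ : ℝ) (hs1 : 1 < s) (hμ : (2:ℝ) ^ (1 - s) < μ) {x y : ℝ}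
    (hx : 1/2 ≤ x) (hxy : x < y) (hy1 : y ≤ 1) :
    (1/s) * |y - 1/2| ^ s + μ * g16 y < (1/s) * |x - 1/2| ^ s + μ * g16 x := by
  have hs0 : (0:ℝ) < s := by linarith
  have h2p : (0:ℝ) < 2 ^ (1 - s) := Real.rpow_pos_of_pos (by norm_num) _
  have hμ0 : (0:ℝ) < μ := h2p.trans hμ
  rw [g16_right hx, g16_right (by linarith),
    abs_of_nonneg (by linarith : (0:ℝ) ≤ x - 1/2), abs_of_nonneg (by linarith : (0:ℝ) ≤ y - 1/2)]
  have hkey := key16 s hs1 (a := x - 1/2) (b := y - 1/2) (by linarith) (by linarith) (by linarith)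
  have hA : (1/s) * ((y - 1/2) ^ s - (x - 1/2) ^ s) ≤ 2 ^ (1 - s) * (y - x) := by
    have h := mul_le_mul_of_nonneg_left hkey (by positivity : (0:ℝ) ≤ 1/s)
    calc (1/s) * ((y - 1/2) ^ s - (x - 1/2) ^ s)
        ≤ (1/s) * (s * 2 ^ (1 - s) * ((y - 1/2) - (x - 1/2))) := h
      _ = 2 ^ (1 - s) * (y - x) := by field_simp; ring
  nlinarith [hA, mul_pos (sub_pos.mpr hμ) (sub_pos.mpr hxy),
    mul_nonneg (mul_nonneg hμ0.le (sub_pos.mpr hxy).le) (by linarith : (0:ℝ) ≤ 2 - x - y)]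

theorem stmt16 (s μ : ℝ) (hs : s ∈ Ioo (1:ℝ) 2) (hμ : (2:ℝ) ^ (1 - s) < μ)
    (F : ℝ → ℝ) (hF : F = fun x => (1/s) * |x - 1/2| ^ s + μ * g16 x) :
    (∀ x ∈ Ioo (0:ℝ) 1, ¬ IsLocalMinOn F (Icc (0:ℝ) 1) x) ∧
    {x | x ∈ Icc (0:ℝ) 1 ∧ ∀ y ∈ Icc (0:ℝ) 1, F x ≤ F y} = {0, 1} := by
  obtain ⟨hs1, hs2⟩ := hs
  have hFapp : ∀ x, F x = (1/s) * |x - 1/2| ^ s + μ * g16 x := by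
    intro x; rw [hF]
  have hF01 : F 0 = F 1 := by
    rw [hFapp, hFapp, g16_left (by norm_num), g16_right (by norm_num)]
    norm_num
  have hmin : ∀ x ∈ Ioo (0:ℝ) 1, F 0 < F x := by
    rintro x ⟨hx0, hx1⟩
    by_cases h : x ≤ 1/2
    · have := mono16 s μ hs1 hμ (le_refl (0:ℝ)) hx0 h
      rw [hFapp, hFapp x]
      simpa using this
    · have := anti16 s μ hs1 hμ (x := x) (y := 1) (by linarith) hx1 le_rfl
      rw [hF01, hFapp 1, hFapp x]
      simpa using this
  constructor
  · rintro x ⟨hx0, hx1⟩ hlocal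
    by_cases h : x ≤ 1/2
    · have hsub : Ioo (0:ℝ) x ⊆ Icc (0:ℝ) 1 := fun y hy =>
        ⟨hy.1.le, by have := hy.2; linarith⟩
      have hne : (𝓝[Ioo (0:ℝ) x] x).NeBot := by
        apply mem_closure_iff_nhdsWithin_neBot.mp
        rw [closure_Ioo (ne_of_lt hx0)]
        exact ⟨hx0.le, le_rfl⟩
      have h2 : IsLocalMinOn F (Ioo (0:ℝ) x) x := hlocal.on_subset hsub
      have hmem : ∀ᶠ y in 𝓝[Ioo (0:ℝ) x] x, y ∈ Ioo (0:ℝ) x :=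
        eventually_mem_nhdsWithin
      obtain ⟨y, hFy, hy⟩ := (h2.and hmem).exists
      have : F y < F x := by
        have := mono16 s μ hs1 hμ (x := y) (y := x) hy.1.le hy.2 h
        rw [hFapp y, hFapp x]; simpa using this
      linarith
    · push_neg at h
      have hsub : Ioo x (1:ℝ) ⊆ Icc (0:ℝ) 1 := fun y hy =>
        ⟨by have := hy.1; linarith, hy.2.le⟩
      have hne : (𝓝[Ioo x (1:ℝ)] x).NeBot := by
        apply mem_closure_iff_nhdsWithin_neBot.mp
        rw [closure_Ioo (ne_of_lt hx1)]
        exact ⟨le_rfl, hx1.le⟩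
      have h2 : IsLocalMinOn F (Ioo x (1:ℝ)) x := hlocal.on_subset hsub
      have hmem : ∀ᶠ y in 𝓝[Ioo x (1:ℝ)] x, y ∈ Ioo x (1:ℝ) :=
        eventually_mem_nhdsWithin
      obtain ⟨y, hFy, hy⟩ := (h2.and hmem).exists
      have : F y < F x := by
        have := anti16 s μ hs1 hμ (x := x) (y := y) h.le hy.1 hy.2.le
        rw [hFapp y, hFapp x]; simpa using this
      linarith
  · ext z
    simp only [mem_setOf_eq, mem_insert_iff, mem_singleton_iff]
    constructor
    · rintro ⟨hz, hminz⟩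
      by_contra hne
      push_neg at hne
      have hzo : z ∈ Ioo (0:ℝ) 1 :=
        ⟨lt_of_le_of_ne hz.1 (Ne.symm hne.1), lt_of_le_of_ne hz.2 hne.2⟩
      have h1 := hmin z hzo
      have h2 := hminz 0 ⟨le_rfl, by norm_num⟩
      linarith
    · have hzero : ∀ y ∈ Icc (0:ℝ) 1, F 0 ≤ F y := by
        intro y hy
        rcases eq_or_lt_of_le hy.1 with hh | hh
        · rw [← hh]
        · rcases eq_or_lt_of_le hy.2 with hh1 | hh1
          · rw [hh1]; exact hF01.le
          · exact (hmin y ⟨hh, hh1⟩).le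
      rintro (rfl | rfl)
      · exact ⟨⟨le_rfl, by norm_num⟩, hzero⟩
      · refine ⟨⟨by norm_num, le_rfl⟩, fun y hy => ?_⟩
        rw [← hF01]; exact hzero y hy
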